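/- arXiv:2405.17687 — 2 statements merged into one kernel-verified Lean document; each statement's English description precedes it below -/
import Mathlib

section
/- Let d ≥ 2. There exists a constant c depending only on d such that for all x_1 ∈ ℝ^d and all s_1, …, s_d ∈ [0,∞), ∫_{ℝ^d} ⋯ ∫_{ℝ^d} h((x_1,s_1),…,(x_d,s_d)) dx_2 ⋯ dx_d ≤ c·∏_{i=1}^d (1 ∨ s_i^{d−1}). -/
/-!
If the spheres `∂B(x₁,s₁), …, ∂B(x_d,s_d)` have a common point `w`, then for every `z` in the unit
ball around `w`, `z` lies in the shell `{|‖z - x₁‖ - s₁| ≤ 1}` and each `x_i` lies in the shell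
`{|‖x_i - z‖ - s_i| ≤ 1}`. So the set of admissible `(x₂, …, x_d)` has measure at most
`vol(B(0,1))⁻¹ ∫ 1[z in the shell around x₁] ∏ᵢ vol(shell around z of radius sᵢ) dz` (Markov and
Tonelli), and a shell of radius `s` and width `2` has volume `O(1 ∨ s^{d-1})`. The indicator `h`
only enters through its requirement that the spheres meet.
-/

open MeasureTheory Filter Set Metric
open scoped ENNReal Topology Classical

noncomputable section

/-- The `d`-th (last) coordinate of a point of `ℝ^d`. -/
def lastCoord {d : ℕ} (x : EuclideanSpace ℝ (Fin d)) : ℝ :=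
  if h : 0 < d then x ⟨d - 1, Nat.sub_lt h one_pos⟩ else 0

/-- The indicator `h((x₁,s₁),…,(x_d,s_d))`: it equals `1` iff the `d`-th coordinate of `x₁`
is minimal among the centres, the boundary spheres `∂B(x_i,s_i)` intersect in exactly two
points, and the `d`-th coordinate of `x₁` is strictly below that of the higher of the two
intersection points. Here the first marked point is `x₁` and the remaining `d-1` marked
points are given by `y`. -/
def hInd (d : ℕ) (x₁ : EuclideanSpace ℝ (Fin d) × ℝ)
    (y : Fin (d - 1) → EuclideanSpace ℝ (Fin d) × ℝ) : ℝ :=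
  if ((∀ i, lastCoord x₁.1 ≤ lastCoord (y i).1) ∧
      (Metric.sphere x₁.1 x₁.2 ∩ ⋂ i, Metric.sphere (y i).1 (y i).2).encard = 2 ∧
      ∃ w ∈ Metric.sphere x₁.1 x₁.2 ∩ ⋂ i, Metric.sphere (y i).1 (y i).2,
        lastCoord x₁.1 < lastCoord w)
  then 1 else 0

lemma add_pow_sub_pow_le {t b : ℝ} (ht : 0 ≤ t) (hb : 0 ≤ b) (d : ℕ) :
    (t + b) ^ d - t ^ d ≤ (1 + b) ^ d * max 1 (t ^ (d - 1)) := by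
  have hpow : ∀ k < d, t ^ k ≤ max 1 (t ^ (d - 1)) := by
    intro k hk
    rcases le_or_gt t 1 with h | h
    · exact (pow_le_one₀ ht h).trans (le_max_left _ _)
    · exact (pow_le_pow_right₀ h.le (by omega)).trans (le_max_right _ _)
  rw [add_pow, Finset.sum_range_succ, Nat.sub_self, pow_zero, Nat.choose_self, Nat.cast_one,
    mul_one, mul_one, add_sub_cancel_right, add_pow, Finset.sum_range_succ, add_mul,
    Finset.sum_mul]
  calc ∑ k ∈ Finset.range d, t ^ k * b ^ (d - k) * d.choose k
      ≤ ∑ k ∈ Finset.range d, 1 ^ k * b ^ (d - k) * d.choose k * max 1 (t ^ (d - 1)) := by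
        refine Finset.sum_le_sum fun k hk => ?_
        calc t ^ k * b ^ (d - k) * d.choose k = t ^ k * (b ^ (d - k) * d.choose k) := by ring
          _ ≤ max 1 (t ^ (d - 1)) * (b ^ (d - k) * d.choose k) := by
            gcongr; exact hpow k (Finset.mem_range.1 hk)
          _ = _ := by ring
    _ ≤ _ := le_add_of_nonneg_right (by positivity)

section Annulus

variable {X : Type*} [PseudoMetricSpace X]

def annulus (c : X) (s a : ℝ) : Set X := {z | dist z c ∈ Icc (s - a) (s + a)}

lemma annulus_eq_closedBall_diff_ball (c : X) (s a : ℝ) :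
    annulus c s a = closedBall c (s + a) \ ball c (s - a) := by
  ext z
  simp [annulus, and_comm]

lemma mem_annulus_comm {c z : X} {s a : ℝ} : z ∈ annulus c s a ↔ c ∈ annulus z s a := by
  simp only [annulus, mem_ofPred_eq, dist_comm]

lemma isClosed_annulus (c : X) (s a : ℝ) : IsClosed (annulus c s a) :=
  isClosed_Icc.preimage (continuous_id.dist continuous_const)

lemma ball_subset_annulus {c w : X} {s : ℝ} (hw : w ∈ sphere c s) (a : ℝ) :
    ball w a ⊆ annulus c s a := by
  intro z hz
  have := abs_dist_sub_le z w c
  rw [mem_sphere.1 hw] at this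
  constructor <;> linarith [abs_le.1 this, mem_ball.1 hz]

end Annulus

lemma integral_le_toReal_of_le_indicator {α : Type*} [MeasurableSpace α] {μ : Measure α}
    {g : α → ℝ} {s : Set α} {B : ℝ≥0∞} (hg₀ : 0 ≤ g) (hg : ∀ x, g x ≤ s.indicator 1 x)
    (hsB : μ s ≤ B) (hB : B ≠ ∞) :
    ∫ x, g x ∂μ ≤ B.toReal := by
  have hm := measurableSet_toMeasurable μ s
  calc ∫ x, g x ∂μ ≤ ∫ x, (toMeasurable μ s).indicator 1 x ∂μ := by
        refine integral_mono_of_nonneg (ae_of_all _ hg₀) ?_ (ae_of_all _ fun x => (hg x).trans ?_)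
        · refine (integrable_indicator_iff hm).2 (integrableOn_const ?_)
          rw [measure_toMeasurable]
          exact ne_top_of_le_ne_top hB hsB
        · exact indicator_le_indicator_of_subset (subset_toMeasurable μ s) (fun _ => zero_le_one) x
    _ = (μ s).toReal := by rw [integral_indicator_one hm, measureReal_def, measure_toMeasurable]
    _ ≤ B.toReal := ENNReal.toReal_mono hB hsB

section Haar

variable {E : Type*} [NormedAddCommGroup E] [NormedSpace ℝ E] [FiniteDimensional ℝ E]
  [MeasurableSpace E] [BorelSpace E] (μ : Measure E) [μ.IsAddHaarMeasure]

open Module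

lemma addHaar_annulus_le (c : E) {s a : ℝ} (hs : 0 ≤ s) (ha : 0 ≤ a) :
    μ (annulus c s a) ≤
      ENNReal.ofReal ((1 + 2 * a) ^ finrank ℝ E * max 1 (s ^ (finrank ℝ E - 1))) *
        μ (ball 0 1) := by
  set d := finrank ℝ E
  rw [annulus_eq_closedBall_diff_ball]
  rcases le_or_gt s a with hsa | hsa
  · calc μ (closedBall c (s + a) \ ball c (s - a)) ≤ μ (closedBall c (s + a)) :=
          measure_mono sdiff_subset
      _ = ENNReal.ofReal ((s + a) ^ d) * μ (ball 0 1) :=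
          Measure.addHaar_closedBall μ c (by linarith)
      _ ≤ _ := by
        gcongr
        calc (s + a) ^ d ≤ (1 + 2 * a) ^ d * 1 := by
              rw [mul_one]; exact pow_le_pow_left₀ (by linarith) (by linarith) d
          _ ≤ _ := by gcongr; exact le_max_left _ _
  · rw [measure_sdiff (ball_subset_closedBall.trans (closedBall_subset_closedBall (by linarith)))
      measurableSet_ball.nullMeasurableSet measure_ball_lt_top.ne,
      Measure.addHaar_closedBall μ c (by linarith), Measure.addHaar_ball_of_pos μ c (by linarith),
      ← ENNReal.sub_mul (fun _ _ => measure_ball_lt_top.ne),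
      ← ENNReal.ofReal_sub _ (by positivity)]
    gcongr
    calc (s + a) ^ d - (s - a) ^ d = (s - a + 2 * a) ^ d - (s - a) ^ d := by ring_nf
      _ ≤ (1 + 2 * a) ^ d * max 1 ((s - a) ^ (d - 1)) :=
        add_pow_sub_pow_le (by linarith) (by linarith) d
      _ ≤ _ := by gcongr; linarith

theorem measure_pi_setOf_spheres_meet_le {ι : Type*} [Fintype ι] (x : E) {s₀ : ℝ} {σ : ι → ℝ}
    (hs₀ : 0 ≤ s₀) (hσ : ∀ i, 0 ≤ σ i) :
    Measure.pi (fun _ : ι => μ) {y | (sphere x s₀ ∩ ⋂ i, sphere (y i) (σ i)).Nonempty} ≤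
      ENNReal.ofReal (3 ^ finrank ℝ E * max 1 (s₀ ^ (finrank ℝ E - 1))) *
        ∏ i, (ENNReal.ofReal (3 ^ finrank ℝ E * max 1 (σ i ^ (finrank ℝ E - 1))) *
          μ (ball 0 1)) := by
  set ν := Measure.pi fun _ : ι => μ
  set V := μ (ball (0 : E) 1)
  set P := ∏ i, (ENNReal.ofReal (3 ^ finrank ℝ E * max 1 (σ i ^ (finrank ℝ E - 1))) * V)
  have hannulus : ∀ c r, 0 ≤ r → μ (annulus c r 1) ≤
      ENNReal.ofReal (3 ^ finrank ℝ E * max 1 (r ^ (finrank ℝ E - 1))) * V := fun c r hr => by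
    simpa only [mul_one, show (1 + 2 : ℝ) = 3 by norm_num] using
      addHaar_annulus_le μ c hr zero_le_one
  set S : Set ((ι → E) × E) :=
    Prod.snd ⁻¹' annulus x s₀ 1 ∩ ⋂ i, {p | p.1 i ∈ annulus p.2 (σ i) 1}
  have hS : MeasurableSet S := by
    refine IsClosed.measurableSet (((isClosed_annulus x s₀ 1).preimage continuous_snd).inter ?_)
    exact isClosed_iInter fun i => isClosed_Icc.preimage (by fun_prop)
  have hwitness : {y | (sphere x s₀ ∩ ⋂ i, sphere (y i) (σ i)).Nonempty} ⊆
      {y | V ≤ μ (Prod.mk y ⁻¹' S)} := by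
    rintro y ⟨w, hw₀, hw⟩
    calc V = μ (ball w 1) := (Measure.addHaar_ball_center μ w 1).symm
      _ ≤ μ (Prod.mk y ⁻¹' S) := measure_mono fun z hz => ⟨ball_subset_annulus hw₀ 1 hz,
        mem_iInter.2 fun i => mem_annulus_comm.1 (ball_subset_annulus (mem_iInter.1 hw i) 1 hz)⟩
  have hsection : ∀ z, ν ((·, z) ⁻¹' S) ≤ (annulus x s₀ 1).indicator (fun _ => P) z := by
    intro z
    by_cases hz : z ∈ annulus x s₀ 1
    · have : (·, z) ⁻¹' S = univ.pi fun i => annulus z (σ i) 1 := by ext y; simp [S, hz]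
      rw [this, Measure.pi_pi, indicator_of_mem hz]
      exact Finset.prod_le_prod' fun i _ => hannulus z (σ i) (hσ i)
    · have : (·, z) ⁻¹' S = ∅ := by ext y; simp [S, hz]
      simp [this]
  have key : V * ν {y | (sphere x s₀ ∩ ⋂ i, sphere (y i) (σ i)).Nonempty} ≤
      V * (ENNReal.ofReal (3 ^ finrank ℝ E * max 1 (s₀ ^ (finrank ℝ E - 1))) * P) :=
    calc _ ≤ V * ν {y | V ≤ μ (Prod.mk y ⁻¹' S)} := by gcongr
      _ ≤ ∫⁻ y, μ (Prod.mk y ⁻¹' S) ∂ν :=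
        mul_meas_ge_le_lintegral (measurable_measure_prodMk_left hS) V
      _ = ν.prod μ S := (Measure.prod_apply hS).symm
      _ = ∫⁻ z, ν ((·, z) ⁻¹' S) ∂μ := Measure.prod_apply_symm hS
      _ ≤ ∫⁻ z, (annulus x s₀ 1).indicator (fun _ => P) z ∂μ := lintegral_mono hsection
      _ = P * μ (annulus x s₀ 1) :=
        lintegral_indicator_const (isClosed_annulus x s₀ 1).measurableSet P
      _ ≤ P * (ENNReal.ofReal (3 ^ finrank ℝ E * max 1 (s₀ ^ (finrank ℝ E - 1))) * V) := by
        gcongr; exact hannulus x s₀ hs₀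
      _ = _ := by ring
  exact (ENNReal.mul_le_mul_iff_right (measure_ball_pos μ 0 one_pos).ne'
    measure_ball_lt_top.ne).1 key

end Haar

lemma hInd_nonneg (d : ℕ) (x₁ : EuclideanSpace ℝ (Fin d) × ℝ)
    (y : Fin (d - 1) → EuclideanSpace ℝ (Fin d) × ℝ) : 0 ≤ hInd d x₁ y := by
  unfold hInd
  split_ifs <;> norm_num

lemma hInd_le_indicator (d : ℕ) (x₁ : EuclideanSpace ℝ (Fin d)) (s₀ : ℝ)
    (σ : Fin (d - 1) → ℝ) (y : Fin (d - 1) → EuclideanSpace ℝ (Fin d)) :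
    hInd d (x₁, s₀) (fun i => (y i, σ i)) ≤
      {y' | (sphere x₁ s₀ ∩ ⋂ i, sphere (y' i) (σ i)).Nonempty}.indicator 1 y := by
  unfold hInd
  split_ifs with h
  · obtain ⟨-, -, w, hw, -⟩ := h
    simp [show (sphere x₁ s₀ ∩ ⋂ i, sphere (y i) (σ i)).Nonempty from ⟨w, hw⟩]
  · exact indicator_nonneg (fun _ _ => zero_le_one) y

/-- Lemma `l:inth` (integrability of `h`): there is a constant `c = c(d)` such that for all
`x₁ ∈ ℝ^d` and `s₁,…,s_d ≥ 0`,
`∫⋯∫ h((x₁,s₁),…,(x_d,s_d)) dx₂⋯dx_d ≤ c·∏_{i=1}^d (1 ∨ s_i^{d-1})`. -/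
theorem hInd_integral_bound (d : ℕ) (hd : 2 ≤ d) :
    ∃ c : ℝ, ∀ (x₁ : EuclideanSpace ℝ (Fin d)) (s : Fin d → ℝ), (∀ i, 0 ≤ s i) →
      (∫ y : Fin (d - 1) → EuclideanSpace ℝ (Fin d),
          hInd d (x₁, s ⟨0, by omega⟩)
            (fun i => (y i, s ⟨(i : ℕ) + 1, by omega⟩))
          ∂(Measure.pi fun _ => volume))
        ≤ c * ∏ i : Fin d, max 1 (s i ^ (d - 1)) := by
  obtain ⟨n, rfl⟩ : ∃ n, d = n + 1 := ⟨d - 1, by omega⟩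
  set v := (volume (ball (0 : EuclideanSpace ℝ (Fin (n + 1))) 1)).toReal
  refine ⟨3 ^ (n + 1) * (3 ^ (n + 1) * v) ^ n, fun x₁ s hs => ?_⟩
  have hbound := measure_pi_setOf_spheres_meet_le (ι := Fin n)
    (volume : Measure (EuclideanSpace ℝ (Fin (n + 1)))) x₁ (hs 0) (fun i => hs i.succ)
  rw [finrank_euclideanSpace_fin, Nat.add_sub_cancel] at hbound
  have hcoef : ∀ r : ℝ, 0 ≤ 3 ^ (n + 1) * max 1 r := fun r => by positivity
  calc _ ≤ _ := integral_le_toReal_of_le_indicator (fun y => hInd_nonneg _ _ _)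
          (hInd_le_indicator _ x₁ _ (fun i => s i.succ)) hbound (by
            exact ENNReal.mul_ne_top ENNReal.ofReal_ne_top (ENNReal.prod_ne_top fun i _ =>
              ENNReal.mul_ne_top ENNReal.ofReal_ne_top measure_ball_lt_top.ne))
    _ = _ := by
      simp only [ENNReal.toReal_mul, ENNReal.toReal_prod, ENNReal.toReal_ofReal (hcoef _),
        ENNReal.toReal_pow, Fin.prod_univ_succ, Finset.prod_mul_distrib, Finset.prod_const,
        Finset.card_univ, Fintype.card_fin, Nat.add_sub_cancel]
      ring

end
end

section
/- Let d = 2, let A ⊂ ℝ² be polygonal with vertices q_1,…,q_κ, let k ∈ ℕ, let Y be a nonnegative random variable with 0 < E[Y^γ] < ∞ for some γ > 2, let β ∈ ℝ, and let (r_n)_{n>0} satisfy n·π·r_n²·E[Y²] − log n − (2k−1)·log log n → β as n → ∞. Then there exists ζ_0 > 0 (depending on A, the law of Y and k) such that for every ζ ∈ (0,ζ_0), setting Q_n := (⋃_{j=1}^κ B(q_j, n^{3ζ}·r_n)) ∩ A, one has Pr[Q_n ⊆ Z_n°(U_{n,A})] → 1 as n → ∞. -/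
/-!
A polygon `A` has a lower volume density: `|B(y, ρ) ∩ A| ≥ c ρ²` for `y ∈ A` and `ρ ≤ ρ₀`.
Indeed `A` is the union of the closures of finitely many bounded open convex cells of the
arrangement of the lines through its edges, and the homothety of centre `y` and ratio
`ρ / diam C` maps such a cell `C`, with `y ∈ closure C`, into `B(y, ρ) ∩ A`.

Fix `ε₀ > 0` with `P(Y > ε₀) > 0`. A volume packing argument gives an `ε₀ r_n / 4`-net of `Q_n`
inside `A` with `O(n^{6ζ})` points. If each net point `z` has at least `k` points of `U_{n,A}`
with mark `> ε₀` within `ε₀ r_n / 2`, their balls cover a neighbourhood of every point of `Q_n`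
`k` times. The number of such points is Poisson with mean of order `n r_n² ≍ log n`, at least
`c₁ log n`, so it is `< k` with probability at most `k n^{-c₁} (c₂ log n)^{k-1}`. A union bound
over the net leaves `O(n^{6ζ - c₁} (log n)^{k-1}) → 0` as soon as `6ζ < c₁`.
-/

open MeasureTheory Filter Set Metric ProbabilityTheory
open scoped Pointwise ENNReal NNReal Topology

noncomputable section

/-- `ω_d`, the volume of the unit ball in `ℝ^d` (with `ω_0 = 1`). -/
def ballVol (d : ℕ) : ℝ := Real.pi ^ ((d : ℝ) / 2) / Real.Gamma (1 + (d : ℝ) / 2)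

/-- The constant `c_d = (1/d!)·(√π·Γ(1+d/2)/Γ((d+1)/2))^{d-1}`. -/
def cConst (d : ℕ) : ℝ :=
  (1 / (d.factorial : ℝ)) *
    (Real.sqrt Real.pi * Real.Gamma (1 + (d : ℝ) / 2) / Real.Gamma (((d : ℝ) + 1) / 2)) ^ (d - 1)

/-- Intensity measure `n·Leb_d|_D ⊗ μ_Y` of the marked Poisson process `U_{n,D}`. -/
def mppIntensity (d : ℕ) (n : ℝ) (D : Set (EuclideanSpace ℝ (Fin d))) (μY : Measure ℝ) :
    Measure (EuclideanSpace ℝ (Fin d) × ℝ) :=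
  ((ENNReal.ofReal n) • (volume.restrict D)).prod μY

/-- `η` is (a realization of) a marked Poisson point process with intensity measure `ι`
under the probability measure `P`: the numbers of points of `η` lying in disjoint
measurable sets are independent, Poisson distributed with the means given by `ι`. -/
def IsMarkedPoissonPP {Ω : Type*} [MeasurableSpace Ω] (P : Measure Ω) {d : ℕ}
    (ι : Measure (EuclideanSpace ℝ (Fin d) × ℝ))
    (η : Ω → Set (EuclideanSpace ℝ (Fin d) × ℝ)) : Prop :=
  IsProbabilityMeasure P ∧
    (∀ B : Set (EuclideanSpace ℝ (Fin d) × ℝ), MeasurableSet B → ι B ≠ ∞ →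
      ∀ m : ℕ, P {ω | (η ω ∩ B).encard = m} =
        ENNReal.ofReal (Real.exp (-(ι B).toReal) * (ι B).toReal ^ m / m.factorial)) ∧
    (∀ (m : ℕ) (B : Fin m → Set (EuclideanSpace ℝ (Fin d) × ℝ)), (∀ i, MeasurableSet (B i)) →
      Pairwise (Function.onFun Disjoint B) →
      iIndepFun (m := fun _ => (⊤ : MeasurableSpace ℕ∞)) (fun i ω => (η ω ∩ B i).encard) P)

/-- The region covered at least `k` times by the closed balls `B(x, r·s)`, `(x,s) ∈ X`. -/
def coveredK (d k : ℕ) (r : ℝ) (X : Set (EuclideanSpace ℝ (Fin d) × ℝ)) :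
    Set (EuclideanSpace ℝ (Fin d)) :=
  {y | ∃ F : Finset (EuclideanSpace ℝ (Fin d) × ℝ), ↑F ⊆ X ∧ k ≤ F.card ∧
    ∀ p ∈ F, y ∈ Metric.closedBall p.1 (r * p.2)}

open Module

def HasLowerVolumeDensity {E : Type*} [PseudoMetricSpace E] [MeasurableSpace E] (μ : Measure E)
    (d : ℕ) (A : Set E) (c ρ₀ : ℝ) : Prop :=
  ∀ y ∈ A, ∀ ρ, 0 < ρ → ρ ≤ ρ₀ → ENNReal.ofReal (c * ρ ^ d) ≤ μ (closedBall y ρ ∩ A)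

section Moments

variable {μ : Measure ℝ}

theorem exists_pos_measure_Ioi_ne_zero (h : μ (Ioi 0) ≠ 0) : ∃ ε > 0, μ (Ioi ε) ≠ 0 := by
  by_contra! hε
  refine h (measure_mono_null (fun x hx => ?_)
    (measure_iUnion_null fun n : ℕ => hε (1 / (n + 1)) Nat.one_div_pos_of_nat))
  obtain ⟨n, hn⟩ := exists_nat_one_div_lt (mem_Ioi.mp hx)
  exact mem_iUnion.mpr ⟨n, hn⟩

theorem measure_Ioi_ne_zero_of_integral_rpow_pos (hμ : μ (Iio 0) = 0) {γ : ℝ} (hγ : γ ≠ 0)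
    (h : 0 < ∫ y, y ^ γ ∂μ) : μ (Ioi 0) ≠ 0 := fun h0 => by
  have hzero : ∀ᵐ y ∂μ, y = 0 := by
    rw [ae_iff, ← measure_union_null hμ h0, Iio_union_Ioi]
    rfl
  rw [integral_eq_zero_of_ae (hzero.mono fun y hy => by simp [hy, Real.zero_rpow hγ])] at h
  exact h.false

theorem integrable_sq_of_integrable_rpow [IsFiniteMeasure μ] (hμ : μ (Iio 0) = 0) {γ : ℝ}
    (hγ : 2 ≤ γ) (h : Integrable (fun y => y ^ γ) μ) : Integrable (fun y : ℝ => y ^ 2) μ := by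
  refine ((integrable_const 1).add h).mono' (by fun_prop) ?_
  have hnonneg : ∀ᵐ y ∂μ, 0 ≤ y := by
    rw [ae_iff]; simp only [not_le]; exact hμ
  filter_upwards [hnonneg] with y hy
  rw [Real.norm_of_nonneg (sq_nonneg y), Pi.add_apply]
  rcases le_total y 1 with hy1 | hy1
  · nlinarith [Real.rpow_nonneg hy γ]
  · have := Real.rpow_le_rpow_of_exponent_le hy1 hγ
    rw [Real.rpow_two] at this
    linarith

theorem integral_sq_pos (hint : Integrable (fun y : ℝ => y ^ 2) μ) (h : μ (Ioi 0) ≠ 0) :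
    0 < ∫ y, y ^ 2 ∂μ := by
  rw [integral_pos_iff_support_of_nonneg_ae (Eventually.of_forall fun y => sq_nonneg y) hint]
  exact (pos_iff_ne_zero.mpr h).trans_le (measure_mono fun y hy => by simp [(mem_Ioi.mp hy).ne'])

theorem exists_measure_Ioi_pos_and_integral_sq_pos [IsFiniteMeasure μ] (hμ : μ (Iio 0) = 0)
    {γ : ℝ} (hγ : 2 < γ) (hint : Integrable (fun y => y ^ γ) μ) (h : 0 < ∫ y, y ^ γ ∂μ) :
    ∃ ε > 0, 0 < (μ (Ioi ε)).toReal ∧ 0 < ∫ y, y ^ 2 ∂μ := by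
  have hpos := measure_Ioi_ne_zero_of_integral_rpow_pos hμ (by positivity) h
  obtain ⟨ε, hε, hεμ⟩ := exists_pos_measure_Ioi_ne_zero hpos
  exact ⟨ε, hε, ENNReal.toReal_pos hεμ (measure_ne_top _ _),
    integral_sq_pos (integrable_sq_of_integrable_rpow hμ hγ.le hint) hpos⟩

end Moments

section Cells

variable {E : Type*} [NormedAddCommGroup E] [NormedSpace ℝ E] {ι : Type*} (f : ι → Dual ℝ E)
  (a : ι → ℝ)

def signCell (σ : ι → Bool) : Set E :=
  ⋂ i, {x | if σ i then a i < f i x else f i x < a i}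

theorem convex_signCell (σ : ι → Bool) : Convex ℝ (signCell f a σ) :=
  convex_iInter fun i => by
    cases σ i
    · exact convex_halfSpace_lt (f i).isLinear (a i)
    · exact convex_halfSpace_gt (f i).isLinear (a i)

theorem isOpen_signCell [FiniteDimensional ℝ E] [Finite ι] (σ : ι → Bool) :
    IsOpen (signCell f a σ) :=
  isOpen_iInter_of_finite fun i => by
    have hf := LinearMap.continuous_of_finiteDimensional (f i)
    cases σ i
    · exact isOpen_lt hf continuous_const
    · exact isOpen_lt continuous_const hf

theorem apply_ne_of_mem_signCell {σ : ι → Bool} {x : E} (hx : x ∈ signCell f a σ) (i : ι) :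
    f i x ≠ a i := by
  have hxi := mem_iInter.mp hx i
  split_ifs at hxi
  · exact hxi.ne'
  · exact hxi.ne

theorem mem_signCell_self {x : E} (hx : ∀ i, f i x ≠ a i) :
    x ∈ signCell f a (fun i => decide (a i < f i x)) :=
  mem_iInter.mpr fun i => by
    by_cases h : a i < f i x
    · simp [h]
    · simpa [h] using lt_of_le_of_ne (not_lt.mp h) (hx i)

end Cells

section FiniteDimensional

variable {E : Type*} [NormedAddCommGroup E] [NormedSpace ℝ E] [FiniteDimensional ℝ E]

theorem exists_segment_subset_setOf_apply_eq (hE : 1 < finrank ℝ E) (u v : E) :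
    ∃ f : Dual ℝ E, f ≠ 0 ∧ segment ℝ u v ⊆ {x | f x = f u} := by
  have hlt : ℝ ∙ (v - u) < ⊤ := span_lt_top_of_card_lt_finrank (by simpa using hE)
  obtain ⟨f, hf, hmap⟩ := Submodule.exists_dual_map_eq_bot_of_lt_top hlt inferInstance
  have hvu : f (v - u) = 0 := by
    simpa [Submodule.map_span] using hmap
  refine ⟨f, hf, ?_⟩
  rw [segment_eq_image']
  rintro _ ⟨θ, -, rfl⟩
  simp [hvu]

variable [MeasurableSpace E] [BorelSpace E]

theorem card_le_of_isSeparated_of_subset_closedBall {F : Finset E} {x : E} {R : ℝ} {ε : ℝ≥0}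
    (hR : 0 ≤ R) (hε : 0 < ε) (hFR : ↑F ⊆ closedBall x R) (hF : IsSeparated ε (F : Set E)) :
    (F.card : ℝ) ≤ (2 * R / ε + 1) ^ finrank ℝ E := by
  set μ : Measure E := Measure.addHaar
  have hε' : (0 : ℝ) < ε := hε
  have hdisj : PairwiseDisjoint (F : Set E) fun z => closedBall z (ε / 2) :=
    fun z hz z' hz' hne => closedBall_disjoint_closedBall <| by
      have : (ε : ℝ≥0∞) < edist z z' := hF hz hz' hne
      rw [edist_nndist, ENNReal.coe_lt_coe, ← NNReal.coe_lt_coe, coe_nndist] at this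
      linarith
  have hsub : ⋃ z ∈ F, closedBall z (ε / 2) ⊆ closedBall x (R + ε / 2) :=
    iUnion₂_subset fun z hz =>
      closedBall_subset_closedBall' (by linarith [mem_closedBall.mp (hFR hz)])
  have hvol : (F.card : ℝ≥0∞) * ENNReal.ofReal ((ε / 2 : ℝ) ^ finrank ℝ E) * μ (ball 0 1) ≤
      ENNReal.ofReal ((R + ε / 2) ^ finrank ℝ E) * μ (ball 0 1) := by
    calc (F.card : ℝ≥0∞) * ENNReal.ofReal ((ε / 2 : ℝ) ^ finrank ℝ E) * μ (ball 0 1)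
        = ∑ z ∈ F, μ (closedBall z (ε / 2)) := by
          simp [Measure.addHaar_closedBall μ _ (half_pos hε').le, mul_assoc]
      _ = μ (⋃ z ∈ F, closedBall z (ε / 2)) :=
          (measure_biUnion_finset hdisj fun _ _ => measurableSet_closedBall).symm
      _ ≤ μ (closedBall x (R + ε / 2)) := measure_mono hsub
      _ = ENNReal.ofReal ((R + ε / 2) ^ finrank ℝ E) * μ (ball 0 1) :=
          Measure.addHaar_closedBall μ _ (by positivity)
  rw [ENNReal.mul_le_mul_iff_left (measure_ball_pos μ 0 one_pos).ne' measure_ball_lt_top.ne,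
    ← ENNReal.ofReal_natCast, ← ENNReal.ofReal_mul (by positivity),
    ENNReal.ofReal_le_ofReal_iff (by positivity)] at hvol
  calc (F.card : ℝ) ≤ (R + ε / 2) ^ finrank ℝ E / (ε / 2) ^ finrank ℝ E := by
        rw [le_div_iff₀ (by positivity)]; exact hvol
    _ = (2 * R / ε + 1) ^ finrank ℝ E := by
        rw [← div_pow]; congr 1; field_simp

theorem exists_finset_net_of_subset_closedBall {T : Set E} {x : E} {R ε : ℝ} (hR : 0 ≤ R)
    (hε : 0 < ε) (hT : T ⊆ closedBall x R) :
    ∃ C : Finset E, ↑C ⊆ T ∧ (∀ y ∈ T, ∃ z ∈ C, dist y z ≤ ε) ∧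
      (C.card : ℝ) ≤ (2 * R / ε + 1) ^ finrank ℝ E := by
  set ε' := ε.toNNReal
  have hε' : 0 < ε' := Real.toNNReal_pos.mpr hε
  set N := ⌊(2 * R / ε + 1) ^ finrank ℝ E⌋₊
  have hsep (S : Set E) (hST : S ⊆ T) (hS : IsSeparated ε' S) : S.encard ≤ N := by
    by_contra! hlt
    obtain ⟨S', hS'S, hS'⟩ := exists_subset_encard_eq (Order.add_one_le_of_lt hlt)
    have hfin : S'.Finite := finite_of_encard_eq_coe hS'
    have hcard := card_le_of_isSeparated_of_subset_closedBall hR hε' ((hfin.coe_toFinset).symm ▸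
      (hS'S.trans hST).trans hT) (hfin.coe_toFinset.symm ▸ hS.subset hS'S)
    rw [Real.coe_toNNReal _ hε.le, ← Nat.le_floor_iff (by positivity)] at hcard
    rw [hfin.encard_eq_coe_toFinset_card] at hS'
    norm_cast at hS'
    omega
  have hpack : packingNumber ε' T ≠ ⊤ :=
    ne_top_of_le_ne_top (ENat.natCast_ne_top N) (iSup₂_le fun S hST => iSup_le (hsep S hST))
  have hfin : (maximalSeparatedSet ε' T).Finite :=
    encard_ne_top_iff.mp (encard_maximalSeparatedSet hpack ▸ hpack)
  refine ⟨hfin.toFinset, by simpa using maximalSeparatedSet_subset, fun y hy => ?_, ?_⟩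
  · obtain ⟨z, hz, hyz⟩ := isCover_maximalSeparatedSet hpack hy
    refine ⟨z, hfin.mem_toFinset.mpr hz, ?_⟩
    have hyz : edist y z ≤ ε' := hyz
    rwa [edist_dist, ENNReal.ofReal_le_iff_le_toReal ENNReal.coe_ne_top, ENNReal.coe_toReal,
      Real.coe_toNNReal _ hε.le] at hyz
  · have := hsep _ maximalSeparatedSet_subset isSeparated_maximalSeparatedSet
    rw [hfin.encard_eq_coe_toFinset_card, Nat.cast_le] at this
    exact (Nat.cast_le.mpr this).trans (Nat.floor_le (by positivity))

theorem exists_finset_net_of_subset_iUnion_closedBall {κ : ℕ} {T : Set E} {x : Fin κ → E}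
    {R ε : ℝ} (hR : 0 ≤ R) (hε : 0 < ε) (hT : T ⊆ ⋃ j, closedBall (x j) R) :
    ∃ C : Finset E, ↑C ⊆ T ∧ (∀ y ∈ T, ∃ z ∈ C, dist y z ≤ ε) ∧
      (C.card : ℝ) ≤ κ * (2 * R / ε + 1) ^ finrank ℝ E := by
  classical
  choose C hCT hCnet hCcard using fun j => exists_finset_net_of_subset_closedBall
    (T := T ∩ closedBall (x j) R) hR hε inter_subset_right
  refine ⟨Finset.univ.biUnion C, by simpa using fun j => (hCT j).trans inter_subset_left,
    fun y hy => ?_, ?_⟩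
  · obtain ⟨j, hj⟩ := mem_iUnion.mp (hT hy)
    obtain ⟨z, hz, hyz⟩ := hCnet j y ⟨hy, hj⟩
    exact ⟨z, Finset.mem_biUnion.mpr ⟨j, Finset.mem_univ j, hz⟩, hyz⟩
  · calc ((Finset.univ.biUnion C).card : ℝ) ≤ ∑ j, ((C j).card : ℝ) := by
          exact_mod_cast Finset.card_biUnion_le
      _ ≤ ∑ _j : Fin κ, (2 * R / ε + 1) ^ finrank ℝ E := Finset.sum_le_sum fun j _ => hCcard j
      _ = κ * (2 * R / ε + 1) ^ finrank ℝ E := by simp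

variable (μ : Measure E) [μ.IsAddHaarMeasure]

theorem Measure.addHaar_setOf_apply_eq {f : Dual ℝ E} (hf : f ≠ 0) (a : ℝ) :
    μ {x | f x = a} = 0 := by
  obtain ⟨v, hv⟩ : ∃ v, f v ≠ 0 := by simpa [LinearMap.ext_iff] using hf
  have hlevel : {x | f x = a} = (AffineSubspace.mk' ((a / f v) • v) (LinearMap.ker f) : Set E) := by
    ext x
    simp [AffineSubspace.mem_mk', sub_eq_zero, hv]
  rw [hlevel]
  refine Measure.addHaar_affineSubspace μ _ fun htop => hf ?_
  rw [← LinearMap.ker_eq_top, ← AffineSubspace.direction_mk' ((a / f v) • v) (LinearMap.ker f),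
    htop, AffineSubspace.direction_top]

theorem Convex.addHaar_closedBall_inter_ge {C : Set E} (hCc : Convex ℝ C) (hCo : IsOpen C)
    (hCb : Bornology.IsBounded C) {y : E} (hy : y ∈ closure C) {ρ : ℝ} (hρ : 0 < ρ)
    (hρC : ρ ≤ diam C) :
    ENNReal.ofReal ((ρ / diam C) ^ finrank ℝ E) * μ C ≤ μ (closedBall y ρ ∩ C) := by
  set t := ρ / diam C
  have hD : 0 < diam C := hρ.trans_le hρC
  have ht : 0 < t := div_pos hρ hD
  have ht1 : t ≤ 1 := (div_le_one hD).mpr hρC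
  have himage : AffineMap.homothety y t '' C ⊆ closedBall y ρ ∩ C := by
    rintro _ ⟨x, hx, rfl⟩
    refine ⟨?_, ?_⟩
    · have hxy : dist y x ≤ diam C := by
        rw [← diam_closure]
        exact dist_le_diam_of_mem hCb.closure hy (subset_closure hx)
      rw [mem_closedBall, dist_homothety_center, Real.norm_of_nonneg ht.le,
        ← div_mul_cancel₀ ρ hD.ne']
      gcongr
    · have := hCc.combo_interior_closure_mem_interior (hCo.interior_eq.symm ▸ hx) hy ht
        (sub_nonneg.mpr ht1) (add_sub_cancel t 1)
      rw [hCo.interior_eq] at this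
      convert this using 1
      rw [AffineMap.homothety_apply, vsub_eq_sub, vadd_eq_add, smul_sub, sub_smul, one_smul]
      abel
  calc ENNReal.ofReal (t ^ finrank ℝ E) * μ C
      = μ (AffineMap.homothety y t '' C) := by
        rw [Measure.addHaar_image_homothety, abs_of_pos (by positivity)]
    _ ≤ μ (closedBall y ρ ∩ C) := measure_mono himage

theorem exists_hasLowerVolumeDensity_of_subset_iUnion_closure [Nontrivial E] {ι : Type*}
    [Finite ι] {A : Set E} {C : ι → Set E} (hCc : ∀ i, Convex ℝ (C i)) (hCo : ∀ i, IsOpen (C i))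
    (hCb : ∀ i, Bornology.IsBounded (C i)) (hCne : ∀ i, (C i).Nonempty) (hCA : ∀ i, C i ⊆ A)
    (hAC : A ⊆ ⋃ i, closure (C i)) :
    ∃ c > 0, ∃ ρ₀ > 0, HasLowerVolumeDensity μ (finrank ℝ E) A c ρ₀ := by
  have hdiam (i : ι) : 0 < diam (C i) :=
    diam_pos (infinite_of_mem_nhds _ ((hCo i).mem_nhds (hCne i).some_mem)).nontrivial (hCb i)
  have hvol (i : ι) : 0 < (μ (C i)).toReal :=
    ENNReal.toReal_pos ((hCo i).measure_pos μ (hCne i)).ne' (hCb i).measure_lt_top.ne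
  obtain ⟨ε, hε, hεC⟩ : ∃ ε > 0, ∀ i, ε ≤ (μ (C i)).toReal / diam (C i) ^ finrank ℝ E ∧
      ε ≤ diam (C i) := by
    have hsmall : ∀ᶠ ε in 𝓝[>] (0 : ℝ), ∀ i,
        ε ≤ (μ (C i)).toReal / diam (C i) ^ finrank ℝ E ∧ ε ≤ diam (C i) :=
      eventually_all.mpr fun i => ((eventually_le_nhds (div_pos (hvol i) (pow_pos (hdiam i) _))).and
        (eventually_le_nhds (hdiam i))).filter_mono nhdsWithin_le_nhds
    exact (hsmall.and self_mem_nhdsWithin).exists.imp fun ε h => ⟨h.2, h.1⟩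
  refine ⟨ε, hε, ε, hε, fun y hy ρ hρ hρε => ?_⟩
  obtain ⟨i, hi⟩ := mem_iUnion.mp (hAC hy)
  calc ENNReal.ofReal (ε * ρ ^ finrank ℝ E)
      ≤ ENNReal.ofReal ((μ (C i)).toReal / diam (C i) ^ finrank ℝ E *
          ρ ^ finrank ℝ E) := by gcongr; exact (hεC i).1
    _ = ENNReal.ofReal ((ρ / diam (C i)) ^ finrank ℝ E) * μ (C i) := by
        rw [div_pow, ← ENNReal.ofReal_toReal (hCb i).measure_lt_top.ne, ← ENNReal.ofReal_mul
          (by positivity), ENNReal.toReal_ofReal ENNReal.toReal_nonneg]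
        ring_nf
    _ ≤ μ (closedBall y ρ ∩ C i) :=
        (hCc i).addHaar_closedBall_inter_ge μ (hCo i) (hCb i) hi hρ (hρε.trans (hεC i).2)
    _ ≤ μ (closedBall y ρ ∩ A) := measure_mono (inter_subset_inter_right _ (hCA i))
theorem exists_hasLowerVolumeDensity_of_frontier_subset [Nontrivial E] {ι : Type*}
    [Finite ι] {A : Set E} (hAc : IsCompact A) (hA : A ⊆ closure (interior A))
    {f : ι → Dual ℝ E} (hf : ∀ i, f i ≠ 0) (a : ι → ℝ)
    (hfr : frontier A ⊆ ⋃ i, {x | f i x = a i}) :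
    ∃ c > 0, ∃ ρ₀ > 0, HasLowerVolumeDensity μ (finrank ℝ E) A c ρ₀ := by
  set H := ⋃ i, {x | f i x = a i}
  let J := {σ : ι → Bool // (signCell f a σ ∩ interior A).Nonempty}
  have hCA (σ : J) : signCell f a σ ⊆ A := by
    have hsub : signCell f a σ ⊆ interior A ∪ Aᶜ := fun x hx => by
      by_contra hxA
      simp only [mem_union, mem_compl_iff, not_or, not_not] at hxA
      have hxfr : x ∈ frontier A := by rw [hAc.isClosed.frontier_eq]; exact ⟨hxA.2, hxA.1⟩
      obtain ⟨i, hi⟩ := mem_iUnion.mp (hfr hxfr)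
      exact apply_ne_of_mem_signCell f a hx i hi
    exact ((convex_signCell f a σ).isPreconnected.subset_left_of_subset_union isOpen_interior
      hAc.isClosed.isOpen_compl (disjoint_compl_right.mono_left interior_subset) hsub
      σ.2).trans interior_subset
  have hdense : Dense Hᶜ := Measure.dense_of_ae (μ := μ) <| (measure_eq_zero_iff_ae_notMem).mp <|
    measure_iUnion_null fun i => Measure.addHaar_setOf_apply_eq μ (hf i) (a i)
  have hgood : interior A ∩ Hᶜ ⊆ ⋃ σ : J, closure (signCell f a σ) := fun x hx => by
    have hxH : ∀ i, f i x ≠ a i := fun i hi => hx.2 (mem_iUnion.mpr ⟨i, hi⟩)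
    have hxσ := mem_signCell_self f a hxH
    exact mem_iUnion.mpr ⟨⟨_, x, hxσ, hx.1⟩, subset_closure hxσ⟩
  have hclosed : IsClosed (⋃ σ : J, closure (signCell f a σ)) :=
    isClosed_iUnion_of_finite fun _ => isClosed_closure
  refine exists_hasLowerVolumeDensity_of_subset_iUnion_closure μ
    (C := fun σ : J => signCell f a σ)
    (fun σ => convex_signCell f a σ) (fun σ => isOpen_signCell f a σ)
    (fun σ => hAc.isBounded.subset (hCA σ)) (fun σ => σ.2.mono inter_subset_left) hCA ?_
  calc A ⊆ closure (interior A) := hA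
    _ ⊆ closure (interior A ∩ Hᶜ) :=
        closure_minimal (hdense.open_subset_closure_inter isOpen_interior) isClosed_closure
    _ ⊆ ⋃ σ : J, closure (signCell f a σ) := closure_minimal hgood hclosed

theorem exists_hasLowerVolumeDensity_of_frontier_subset_segment (hE : 1 < finrank ℝ E)
    {ι : Type*} [Finite ι] {A : Set E} (hAc : IsCompact A) (hA : A ⊆ closure (interior A))
    (u v : ι → E) (hfr : frontier A ⊆ ⋃ i, segment ℝ (u i) (v i)) :
    ∃ c > 0, ∃ ρ₀ > 0, HasLowerVolumeDensity μ (finrank ℝ E) A c ρ₀ := by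
  have : Nontrivial E := Module.nontrivial_of_finrank_pos (R := ℝ) (by omega)
  choose f hf hseg using fun i => exists_segment_subset_setOf_apply_eq hE (u i) (v i)
  exact exists_hasLowerVolumeDensity_of_frontier_subset μ hAc hA hf (fun i => f i (u i))
    (hfr.trans (iUnion_mono hseg))

end FiniteDimensional

section Coverage

variable {d : ℕ} {Ω : Type*} [MeasurableSpace Ω] {P : Measure Ω}
  {η : Ω → Set (EuclideanSpace ℝ (Fin d) × ℝ)}

theorem subset_interior_coveredK {k : ℕ} {r ε₀ a : ℝ} {X : Set (EuclideanSpace ℝ (Fin d) × ℝ)}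
    {T Z : Set (EuclideanSpace ℝ (Fin d))} (hr : 0 ≤ r)
    (hnet : ∀ y ∈ T, ∃ z ∈ Z, dist y z + a < r * ε₀)
    (hX : ∀ z ∈ Z, (k : ℕ∞) ≤ (X ∩ closedBall z a ×ˢ Ioi ε₀).encard) :
    T ⊆ interior (coveredK d k r X) := fun y hy => by
  obtain ⟨z, hz, hyz⟩ := hnet y hy
  obtain ⟨F, hFX, hFk⟩ := exists_subset_encard_eq (hX z hz)
  have hF : F.Finite := finite_of_encard_eq_coe hFk
  have hball : ball y (r * ε₀ - a - dist y z) ⊆ coveredK d k r X := fun y' hy' => by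
    refine ⟨hF.toFinset, by simpa using hFX.trans inter_subset_left, ?_, fun p hp => ?_⟩
    · rw [hF.encard_eq_coe_toFinset_card, Nat.cast_inj] at hFk
      exact hFk.ge
    · obtain ⟨-, hpz, hpε⟩ := hFX (hF.mem_toFinset.mp hp)
      have hrp : r * ε₀ ≤ r * p.2 := mul_le_mul_of_nonneg_left (le_of_lt hpε) hr
      have := dist_triangle4 y' y z p.1
      rw [mem_closedBall, dist_comm] at hpz
      rw [mem_closedBall]
      linarith [mem_ball.mp hy']
  exact mem_interior.mpr ⟨_, hball, isOpen_ball, mem_ball_self (by linarith)⟩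

theorem IsMarkedPoissonPP.measure_encard_lt_le {ι : Measure (EuclideanSpace ℝ (Fin d) × ℝ)}
    (hη : IsMarkedPoissonPP P ι η)
    {B : Set (EuclideanSpace ℝ (Fin d) × ℝ)} (hB : MeasurableSet B) {ℓ L : ℝ} (hℓ : 1 ≤ ℓ)
    (hℓB : ℓ ≤ (ι B).toReal) (hBL : (ι B).toReal ≤ L) (k : ℕ) :
    P {ω | (η ω ∩ B).encard < k} ≤ ENNReal.ofReal (k * (Real.exp (-ℓ) * L ^ (k - 1))) := by
  set m := (ι B).toReal
  have hιB : ι B ≠ ∞ := fun h => by simp [m, h] at hℓB; linarith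
  have hsub : {ω | (η ω ∩ B).encard < k} ⊆ ⋃ i ∈ Finset.range k, {ω | (η ω ∩ B).encard = i} :=
    fun ω hω => by
      obtain ⟨i, hi⟩ := ENat.ne_top_iff_exists.mp (hω.trans_le le_top).ne
      simp only [mem_ofPred_eq, ← hi, Nat.cast_lt] at hω
      exact mem_biUnion (Finset.mem_range.mpr hω) hi.symm
  have hterm (i : ℕ) (hi : i ∈ Finset.range k) :
      P {ω | (η ω ∩ B).encard = i} ≤ ENNReal.ofReal (Real.exp (-ℓ) * L ^ (k - 1)) := by
    rw [hη.2.1 B hB hιB i]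
    refine ENNReal.ofReal_le_ofReal ?_
    have hik : i ≤ k - 1 := by have := Finset.mem_range.mp hi; omega
    calc Real.exp (-m) * m ^ i / i.factorial ≤ Real.exp (-m) * m ^ i :=
          div_le_self (by positivity) (by exact_mod_cast i.factorial_pos)
      _ ≤ Real.exp (-ℓ) * L ^ (k - 1) :=
          mul_le_mul (Real.exp_le_exp.mpr (neg_le_neg hℓB))
            ((pow_le_pow_right₀ (by linarith) hik).trans (pow_le_pow_left₀ (by linarith) hBL _))
            (by positivity) (by positivity)
  calc P {ω | (η ω ∩ B).encard < k}
      ≤ ∑ i ∈ Finset.range k, P {ω | (η ω ∩ B).encard = i} :=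
        (measure_mono hsub).trans (measure_biUnion_finset_le _ _)
    _ ≤ ∑ _i ∈ Finset.range k, ENNReal.ofReal (Real.exp (-ℓ) * L ^ (k - 1)) :=
        Finset.sum_le_sum hterm
    _ = ENNReal.ofReal (k * (Real.exp (-ℓ) * L ^ (k - 1))) := by
        rw [Finset.sum_const, Finset.card_range, nsmul_eq_mul, ← ENNReal.ofReal_natCast,
          ← ENNReal.ofReal_mul (Nat.cast_nonneg k)]

theorem toReal_mppIntensity_closedBall_prod_Ioi {n : ℝ} (hn : 0 ≤ n)
    (A : Set (EuclideanSpace ℝ (Fin d))) (μY : Measure ℝ) [SFinite μY]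
    (z : EuclideanSpace ℝ (Fin d)) (a ε : ℝ) :
    (mppIntensity d n A μY (closedBall z a ×ˢ Ioi ε)).toReal =
      n * (volume (closedBall z a ∩ A)).toReal * (μY (Ioi ε)).toReal := by
  rw [mppIntensity, Measure.prod_prod, Measure.smul_apply,
    Measure.restrict_apply measurableSet_closedBall, smul_eq_mul, ENNReal.toReal_mul,
    ENNReal.toReal_mul, ENNReal.toReal_ofReal hn]

theorem IsMarkedPoissonPP.measure_encard_closedBall_prod_Ioi_lt_le
    {A : Set (EuclideanSpace ℝ (Fin d))} {μY : Measure ℝ} [SFinite μY] {c ρ₀ : ℝ}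
    (hA : HasLowerVolumeDensity volume d A c ρ₀)
    {n ρ ε₀ ℓ L : ℝ} (hn : 0 ≤ n) (hρ : 0 < ρ) (hρ₀ : ρ ≤ ρ₀) (hℓ : 1 ≤ ℓ)
    (hℓn : ℓ ≤ n * (c * ρ ^ d) * (μY (Ioi ε₀)).toReal)
    (hnL : n * (ρ ^ d * (volume (ball (0 : EuclideanSpace ℝ (Fin d)) 1)).toReal) *
      (μY (Ioi ε₀)).toReal ≤ L)
    (hη : IsMarkedPoissonPP P (mppIntensity d n A μY) η) {z : EuclideanSpace ℝ (Fin d)}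
    (hz : z ∈ A) (k : ℕ) :
    P {ω | (η ω ∩ closedBall z ρ ×ˢ Ioi ε₀).encard < k} ≤
      ENNReal.ofReal (k * (Real.exp (-ℓ) * L ^ (k - 1))) := by
  have hfin : volume (closedBall z ρ ∩ A) ≠ ∞ :=
    (measure_mono inter_subset_left).trans_lt measure_closedBall_lt_top |>.ne
  have hball : volume (closedBall z ρ) =
      ENNReal.ofReal (ρ ^ d) * volume (ball (0 : EuclideanSpace ℝ (Fin d)) 1) := by
    simpa [finrank_euclideanSpace_fin] using Measure.addHaar_closedBall volume z hρ.le
  have hlow : c * ρ ^ d ≤ (volume (closedBall z ρ ∩ A)).toReal :=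
    (ENNReal.ofReal_le_iff_le_toReal hfin).mp (hA z hz ρ hρ hρ₀)
  have hupp : (volume (closedBall z ρ ∩ A)).toReal ≤
      ρ ^ d * (volume (ball (0 : EuclideanSpace ℝ (Fin d)) 1)).toReal :=
    calc (volume (closedBall z ρ ∩ A)).toReal ≤ (volume (closedBall z ρ)).toReal :=
          ENNReal.toReal_mono measure_closedBall_lt_top.ne (measure_mono inter_subset_left)
      _ = _ := by rw [hball, ENNReal.toReal_mul, ENNReal.toReal_ofReal (by positivity)]
  refine hη.measure_encard_lt_le (measurableSet_closedBall.prod measurableSet_Ioi) hℓ ?_ ?_ k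
  · rw [toReal_mppIntensity_closedBall_prod_Ioi hn]
    exact hℓn.trans (by gcongr)
  · rw [toReal_mppIntensity_closedBall_prod_Ioi hn]
    exact le_trans (by gcongr) hnL

/- The net has spacing `ε₀ r / 4` and the points are counted within `ε₀ r / 2`, which leaves a
margin `ε₀ r / 4` below the radius `r s > r ε₀` of their balls; `8 / ε₀ = 2 t r / (ε₀ r / 4)`
comes from the size of the net. -/
theorem one_sub_le_measure_subset_interior_coveredK {k κ : ℕ}
    {A : Set (EuclideanSpace ℝ (Fin d))} {μY : Measure ℝ} [SFinite μY] {c ρ₀ : ℝ}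
    (hA : HasLowerVolumeDensity volume d A c ρ₀)
    (q : Fin κ → EuclideanSpace ℝ (Fin d)) {n r t ε₀ ℓ L : ℝ} (hn : 0 ≤ n) (hr : 0 < r)
    (ht : 0 ≤ t) (hε₀ : 0 < ε₀) (hρ₀ : ε₀ * r / 2 ≤ ρ₀) (hℓ : 1 ≤ ℓ)
    (hℓn : ℓ ≤ c * (ε₀ / 2) ^ d * (μY (Ioi ε₀)).toReal * (n * r ^ d))
    (hnL : (ε₀ / 2) ^ d * (volume (ball (0 : EuclideanSpace ℝ (Fin d)) 1)).toReal *
      (μY (Ioi ε₀)).toReal * (n * r ^ d) ≤ L)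
    (hη : IsMarkedPoissonPP P (mppIntensity d n A μY) η) :
    1 - ENNReal.ofReal (κ * k * ((8 / ε₀ * t + 1) ^ d * (Real.exp (-ℓ) * L ^ (k - 1)))) ≤
      P {ω | (⋃ j, closedBall (q j) (t * r)) ∩ A ⊆ interior (coveredK d k r (η ω))} := by
  set ρ := ε₀ * r / 2
  set b := k * (Real.exp (-ℓ) * L ^ (k - 1))
  have hρ : 0 < ρ := by positivity
  have hb : 0 ≤ b := by have : 0 ≤ L := le_trans (by positivity) hnL; positivity
  obtain ⟨Z, hZT, hZnet, hZcard⟩ := exists_finset_net_of_subset_iUnion_closedBall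
    (T := (⋃ j, closedBall (q j) (t * r)) ∩ A) (by positivity) (half_pos hρ) inter_subset_left
  have hZ : (Z.card : ℝ) ≤ κ * (8 / ε₀ * t + 1) ^ d :=
    hZcard.trans_eq (by simp only [ρ, finrank_euclideanSpace_fin]; field_simp; ring)
  set U := ⋃ z ∈ Z, {ω | (η ω ∩ closedBall z ρ ×ˢ Ioi ε₀).encard < k}
  have hcover : Uᶜ ⊆ {ω | (⋃ j, closedBall (q j) (t * r)) ∩ A ⊆
      interior (coveredK d k r (η ω))} := fun ω hω =>
    subset_interior_coveredK hr.le
      (fun y hy => (hZnet y hy).imp fun z ⟨hz, hyz⟩ =>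
        ⟨hz, by simp only [ρ] at hyz ⊢; linarith [mul_pos hε₀ hr]⟩)
      (fun z hz => not_lt.mp fun hlt => hω (mem_biUnion hz hlt))
  have hU : P U ≤ ENNReal.ofReal (κ * k * ((8 / ε₀ * t + 1) ^ d * (Real.exp (-ℓ) * L ^ (k - 1)))) :=
    calc P U ≤ ∑ z ∈ Z, P {ω | (η ω ∩ closedBall z ρ ×ˢ Ioi ε₀).encard < k} :=
          measure_biUnion_finset_le _ _
      _ ≤ ∑ _z ∈ Z, ENNReal.ofReal b := Finset.sum_le_sum fun z hz =>
          hη.measure_encard_closedBall_prod_Ioi_lt_le hA hn hρ hρ₀ hℓ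
            (hℓn.trans_eq (by ring)) (le_of_eq_of_le (by ring) hnL) (hZT hz).2 k
      _ = ENNReal.ofReal (Z.card * b) := by
          rw [Finset.sum_const, nsmul_eq_mul, ← ENNReal.ofReal_natCast,
            ← ENNReal.ofReal_mul (Nat.cast_nonneg _)]
      _ ≤ _ := by
          refine ENNReal.ofReal_le_ofReal ((mul_le_mul_of_nonneg_right hZ hb).trans_eq ?_)
          simp only [b]
          ring
  calc _ ≤ P univ - P U := by
        gcongr; exact hη.1.measure_univ.ge
    _ ≤ P Uᶜ := tsub_le_iff_left.mpr (measure_univ_le_add_compl U)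
    _ ≤ _ := measure_mono hcover

end Coverage

theorem tendsto_div_log_of_tendsto_sub_log_sub_mul_log_log {f : ℝ → ℝ} {C β : ℝ}
    (hf : Tendsto (fun x => f x - Real.log x - C * Real.log (Real.log x)) atTop (𝓝 β)) :
    Tendsto (fun x => f x / Real.log x) atTop (𝓝 1) := by
  have hinv : Tendsto (fun x => (Real.log x)⁻¹) atTop (𝓝 0) :=
    tendsto_inv_atTop_zero.comp Real.tendsto_log_atTop
  have hll : Tendsto (fun x => Real.log (Real.log x) / Real.log x) atTop (𝓝 0) :=
    Real.isLittleO_log_id_atTop.tendsto_div_nhds_zero.comp Real.tendsto_log_atTop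
  have hlim := (tendsto_const_nhds (x := (1 : ℝ))).add ((hll.const_mul C).add (hf.mul hinv))
  rw [mul_zero, mul_zero, add_zero, add_zero] at hlim
  refine hlim.congr' ?_
  filter_upwards [Real.tendsto_log_atTop.eventually_gt_atTop 0] with x hx
  field_simp
  ring

theorem eventually_log_le_mul_sq_le {r : ℝ → ℝ} {I C β : ℝ} (hI : 0 < I)
    (hr : ∀ n : ℝ, 0 < n → 0 ≤ r n)
    (hrn : Tendsto (fun n : ℝ => n * Real.pi * r n ^ 2 * I - Real.log n
      - C * Real.log (Real.log n)) atTop (𝓝 β)) :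
    ∀ᶠ n in atTop, 0 < r n ∧ (2 * Real.pi * I)⁻¹ * Real.log n ≤ n * r n ^ 2 ∧
      n * r n ^ 2 ≤ 2 * (Real.pi * I)⁻¹ * Real.log n := by
  have hratio := tendsto_div_log_of_tendsto_sub_log_sub_mul_log_log hrn
  filter_upwards [hratio.eventually (lt_mem_nhds (by norm_num : (1 / 2 : ℝ) < 1)),
    hratio.eventually (gt_mem_nhds (by norm_num : (1 : ℝ) < 2)),
    Real.tendsto_log_atTop.eventually_gt_atTop 0, eventually_gt_atTop 0] with n hlow hupp hlog hn
  rw [lt_div_iff₀ hlog] at hlow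
  rw [div_lt_iff₀ hlog] at hupp
  have hπI : 0 < Real.pi * I := by positivity
  refine ⟨(hr n hn).lt_of_ne fun h => ?_, ?_, ?_⟩
  · rw [← h] at hlow; linarith
  · rw [← div_eq_inv_mul, div_le_iff₀ (by positivity)]; linarith
  · rw [mul_assoc, ← div_eq_inv_mul, ← mul_div_assoc, le_div_iff₀ hπI]; linarith

theorem tendsto_zero_of_eventually_mul_sq_le_log {r : ℝ → ℝ} {b : ℝ}
    (h : ∀ᶠ n in atTop, 0 ≤ r n ∧ n * r n ^ 2 ≤ b * Real.log n) : Tendsto r atTop (𝓝 0) := by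
  have hsq : Tendsto (fun n => r n ^ 2) atTop (𝓝 0) := by
    have hlog : Tendsto (fun n => b * (Real.log n / n)) atTop (𝓝 0) := by
      simpa using Real.isLittleO_log_id_atTop.tendsto_div_nhds_zero.const_mul b
    refine squeeze_zero' (Eventually.of_forall fun n => sq_nonneg _) ?_ hlog
    filter_upwards [h, eventually_gt_atTop 0] with n hn hn0
    rw [mul_div_assoc', le_div_iff₀ hn0]
    linarith [hn.2]
  have hsqrt := (Real.continuous_sqrt.tendsto 0).comp hsq
  rw [Real.sqrt_zero] at hsqrt
  refine hsqrt.congr' ?_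
  filter_upwards [h] with n hn
  exact Real.sqrt_sq hn.1

theorem tendsto_rpow_add_one_pow_mul_exp_neg_mul_log {A B c s : ℝ} {d j : ℕ} (hA : 0 ≤ A)
    (hs : 0 ≤ s) (hB : 0 ≤ B) (hsc : d * s < c) :
    Tendsto (fun x : ℝ => (A * x ^ s + 1) ^ d * (Real.exp (-(c * Real.log x)) *
      (B * Real.log x) ^ j)) atTop (𝓝 0) := by
  have hlo : Tendsto (fun x : ℝ => (A + 1) ^ d * B ^ j * (Real.log x ^ j / x ^ (c - d * s)))
      atTop (𝓝 0) := by
    simpa using (isLittleO_log_rpow_rpow_atTop j (sub_pos.mpr hsc)).tendsto_div_nhds_zero.const_mul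
      ((A + 1) ^ d * B ^ j)
  refine squeeze_zero' ?_ ?_ hlo
  · filter_upwards [eventually_ge_atTop 1] with x hx
    have := Real.log_nonneg hx
    positivity
  · filter_upwards [eventually_ge_atTop 1] with x hx
    have hx0 : 0 < x := by linarith
    have hxs : 1 ≤ x ^ s := Real.one_le_rpow hx hs
    have hkey : (x ^ s) ^ d * Real.exp (-(c * Real.log x)) = (x ^ (c - d * s))⁻¹ := by
      rw [← Real.rpow_natCast, ← Real.rpow_mul hx0.le, Real.rpow_def_of_pos hx0,
        Real.rpow_def_of_pos hx0, ← Real.exp_add, ← Real.exp_neg]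
      ring_nf
    calc (A * x ^ s + 1) ^ d * (Real.exp (-(c * Real.log x)) * (B * Real.log x) ^ j)
        ≤ ((A + 1) * x ^ s) ^ d * (Real.exp (-(c * Real.log x)) * (B * Real.log x) ^ j) := by
          have := Real.log_nonneg hx
          gcongr
          nlinarith
      _ = (A + 1) ^ d * B ^ j * (Real.log x ^ j / x ^ (c - d * s)) := by
          rw [mul_pow, mul_pow, div_eq_mul_inv, ← hkey]
          ring

theorem ENNReal.tendsto_one_of_one_sub_ofReal_le {α : Type*} {l : Filter α} {p : α → ℝ≥0∞}
    {b : α → ℝ} (hb : Tendsto b l (𝓝 0))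
    (hp : ∀ᶠ x in l, 1 - ENNReal.ofReal (b x) ≤ p x ∧ p x ≤ 1) :
    Tendsto p l (𝓝 1) := by
  have hlow : Tendsto (fun x => 1 - ENNReal.ofReal (b x)) l (𝓝 1) := by
    simpa using ENNReal.Tendsto.sub tendsto_const_nhds (ENNReal.tendsto_ofReal hb)
      (Or.inl ENNReal.one_ne_top)
  exact tendsto_of_tendsto_of_tendsto_of_le_of_le' hlow tendsto_const_nhds
    (hp.mono fun _ h => h.1) (hp.mono fun _ h => h.2)

theorem polygon_corner_coverage_general (A : Set (EuclideanSpace ℝ (Fin 2)))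
    (hAcpt : IsCompact A) (hAcl : A = closure (interior A))
    (m : ℕ) (u v : Fin m → EuclideanSpace ℝ (Fin 2))
    (hedges : frontier A = ⋃ i, segment ℝ (u i) (v i))
    (κ : ℕ) (q : Fin κ → EuclideanSpace ℝ (Fin 2))
    (k : ℕ)
    (μY : Measure ℝ) [IsProbabilityMeasure μY] (hYnonneg : μY (Set.Iio 0) = 0)
    (γ : ℝ) (hγ : (2 : ℝ) < γ)
    (hmomInt : Integrable (fun y : ℝ => y ^ γ) μY) (hmomPos : 0 < ∫ y, y ^ γ ∂μY)
    (β : ℝ) (r : ℝ → ℝ) (hr : ∀ n : ℝ, 0 < n → 0 ≤ r n)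
    (hrn : Tendsto (fun n : ℝ =>
        n * Real.pi * r n ^ 2 * (∫ y, y ^ 2 ∂μY) - Real.log n
          - (2 * (k : ℝ) - 1) * Real.log (Real.log n))
      atTop (𝓝 β))
    (Ω : ℝ → Type*) [∀ n, MeasurableSpace (Ω n)] (P : ∀ n, Measure (Ω n))
    (η : ∀ n : ℝ, Ω n → Set (EuclideanSpace ℝ (Fin 2) × ℝ))
    (hη : ∀ n : ℝ, 0 < n → IsMarkedPoissonPP (P n) (mppIntensity 2 n A μY) (η n)) :
    ∃ ζ₀ : ℝ, 0 < ζ₀ ∧ ∀ ζ : ℝ, 0 < ζ → ζ < ζ₀ →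
      Tendsto (fun n : ℝ =>
          (P n) {ω | (⋃ j, Metric.closedBall (q j) (n ^ (3 * ζ) * r n)) ∩ A ⊆
            interior (coveredK 2 k (r n) (η n ω))})
        atTop (𝓝 1) := by
  obtain ⟨ε₀, hε₀, hp₀, hI⟩ :=
    exists_measure_Ioi_pos_and_integral_sq_pos hYnonneg hγ hmomInt hmomPos
  obtain ⟨c, hc, ρ₀, hρ₀, hA⟩ := exists_hasLowerVolumeDensity_of_frontier_subset_segment
    volume (by simp) hAcpt hAcl.subset u v hedges.subset
  rw [finrank_euclideanSpace_fin] at hA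
  set c₁ := c * (ε₀ / 2) ^ 2 * (μY (Ioi ε₀)).toReal * (2 * Real.pi * ∫ y, y ^ 2 ∂μY)⁻¹
  set c₂ := (ε₀ / 2) ^ 2 * (volume (ball (0 : EuclideanSpace ℝ (Fin 2)) 1)).toReal *
    (μY (Ioi ε₀)).toReal * (2 * (Real.pi * ∫ y, y ^ 2 ∂μY)⁻¹)
  have hc₁ : 0 < c₁ := by positivity
  refine ⟨c₁ / 6, by positivity, fun ζ hζ hζc => ?_⟩
  have hbounds := eventually_log_le_mul_sq_le hI hr hrn
  have hr0 := tendsto_zero_of_eventually_mul_sq_le_log (hbounds.mono fun n h => ⟨h.1.le, h.2.2⟩)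
  have hbound := (tendsto_rpow_add_one_pow_mul_exp_neg_mul_log (A := 8 / ε₀) (c := c₁)
    (B := c₂) (d := 2) (j := k - 1) (by positivity) (by positivity : 0 ≤ 3 * ζ) (by positivity)
    (by push_cast; linarith)).const_mul ((κ : ℝ) * k)
  rw [mul_zero] at hbound
  refine ENNReal.tendsto_one_of_one_sub_ofReal_le hbound ?_
  filter_upwards [hbounds, ((hr0.const_mul ε₀).div_const 2).eventually
      (eventually_le_nhds (by simpa using hρ₀)),
    (Real.tendsto_log_atTop.const_mul_atTop hc₁).eventually_ge_atTop 1,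
    eventually_gt_atTop 0] with n ⟨hrpos, hlow, hupp⟩ hsmall hlog hn
  have := (hη n hn).1
  exact ⟨one_sub_le_measure_subset_interior_coveredK hA q hn.le hrpos (by positivity) hε₀ hsmall
    hlog ((mul_assoc _ _ _).trans_le (mul_le_mul_of_nonneg_left hlow (by positivity)))
    ((mul_le_mul_of_nonneg_left hupp (by positivity)).trans_eq (mul_assoc _ _ _).symm) (hη n hn),
    prob_le_one⟩

/-- Lemma `lemQ`: coverage of the regions near the corners of a polygon. For all small
enough `ζ > 0`, the corner region `Q_n = (⋃_j B(q_j, n^{3ζ}·r_n)) ∩ A` is covered (by open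
balls) with probability tending to 1. -/
theorem polygon_corner_coverage (A : Set (EuclideanSpace ℝ (Fin 2)))
    (hAcpt : IsCompact A) (hAcl : A = closure (interior A))
    (m : ℕ) (u v : Fin m → EuclideanSpace ℝ (Fin 2))
    (hedges : frontier A = ⋃ i, segment ℝ (u i) (v i))
    (κ : ℕ) (q : Fin κ → EuclideanSpace ℝ (Fin 2))
    (hvert : Set.range q = {x | ∃ i j : Fin m, i ≠ j ∧
      x ∈ segment ℝ (u i) (v i) ∩ segment ℝ (u j) (v j)})
    (k : ℕ) (hk : 1 ≤ k)
    (μY : Measure ℝ) [IsProbabilityMeasure μY] (hYnonneg : μY (Set.Iio 0) = 0)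
    (γ : ℝ) (hγ : (2 : ℝ) < γ)
    (hmomInt : Integrable (fun y : ℝ => y ^ γ) μY) (hmomPos : 0 < ∫ y, y ^ γ ∂μY)
    (β : ℝ) (r : ℝ → ℝ) (hr : ∀ n : ℝ, 0 < n → 0 ≤ r n)
    (hrn : Tendsto (fun n : ℝ =>
        n * Real.pi * r n ^ 2 * (∫ y, y ^ 2 ∂μY) - Real.log n
          - (2 * (k : ℝ) - 1) * Real.log (Real.log n))
      atTop (𝓝 β))
    (Ω : ℝ → Type*) [∀ n, MeasurableSpace (Ω n)] (P : ∀ n, Measure (Ω n))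
    (η : ∀ n : ℝ, Ω n → Set (EuclideanSpace ℝ (Fin 2) × ℝ))
    (hη : ∀ n : ℝ, 0 < n → IsMarkedPoissonPP (P n) (mppIntensity 2 n A μY) (η n)) :
    ∃ ζ₀ : ℝ, 0 < ζ₀ ∧ ∀ ζ : ℝ, 0 < ζ → ζ < ζ₀ →
      Tendsto (fun n : ℝ =>
          (P n) {ω | (⋃ j, Metric.closedBall (q j) (n ^ (3 * ζ) * r n)) ∩ A ⊆
            interior (coveredK 2 k (r n) (η n ω))})
        atTop (𝓝 1) :=
  polygon_corner_coverage_general A hAcpt hAcl m u v hedges κ q k μY hYnonneg γ hγ hmomInt hmomPos β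
    r hr hrn Ω P η hη
end
end
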